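/- Local Lipschitz dependence of the posterior density on the measurement (Lemma 4.4): Assume ρ satisfies (N.1)–(N.3) and that L : X → ℝ^d is Borel measurable with ‖L‖_{L²(μ_prior)} < ∞. There exists a constant C > 0, depending only on ρ, such that for all y, y' ∈ ℝ^d: sup_{ū ∈ X} | ρ(y − L(ū))/Z(y) − ρ(y' − L(ū))/Z(y') | ≤ C |y − y'|_Γ exp( |y|_Γ² + |y'|_Γ² + 2‖L‖²_{L²(μ_prior)} ). -/

import Mathlib

open MeasureTheory
open scoped BigOperators ENNReal Matrix

noncomputable section

/-- The Γ-weighted norm `|y|_Γ = sqrt ⟨y, Γ⁻¹ y⟩` on `ℝ^d`. -/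
def gammaNorm {d : ℕ} (Γ : Matrix (Fin d) (Fin d) ℝ) (y : Fin d → ℝ) : ℝ :=
  Real.sqrt (y ⬝ᵥ (Γ⁻¹).mulVec y)

/-- A noise density satisfying (N.1)–(N.3). -/
structure IsNoiseDensity {d : ℕ} (Γ : Matrix (Fin d) (Fin d) ℝ) (ρ : (Fin d → ℝ) → ℝ)
    (Lρ Cb Ct : ℝ) : Prop where
  Lρ_pos : 0 < Lρ
  Cb_pos : 0 < Cb
  Ct_pos : 0 < Ct
  pos : ∀ y, 0 < ρ y
  lip : ∀ y y', |ρ y - ρ y'| ≤ Lρ * gammaNorm Γ (y - y')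
  bdd : ∀ y, ρ y ≤ Cb
  tail : ∀ y, Ct⁻¹ * Real.exp (-(1 / 2) * (gammaNorm Γ y) ^ 2) ≤ ρ y

/-- Wasserstein-1 distance in Kantorovich–Rubinstein dual form. -/
def W1 {X : Type*} [NormedAddCommGroup X] [MeasurableSpace X] (μ ν : Measure X) : ℝ :=
  sSup {r : ℝ | ∃ Φ : X → ℝ, LipschitzWith 1 Φ ∧ Φ 0 = 0 ∧
    r = (∫ u, Φ u ∂μ) - ∫ u, Φ u ∂ν}

/-- Normalization constant `Z(y) = ∫ ρ(y − L(ū)) dμ_prior(ū)`. -/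
def bayesZ {X : Type*} [MeasurableSpace X] {d : ℕ} (μp : Measure X)
    (ρ : (Fin d → ℝ) → ℝ) (L : X → Fin d → ℝ) (y : Fin d → ℝ) : ℝ :=
  ∫ u, ρ (y - L u) ∂μp

/-- The Bayesian posterior `μ^y = Z(y)⁻¹ ρ(y − L(·)) · μ_prior`. -/
def bayesPosterior {X : Type*} [MeasurableSpace X] {d : ℕ} (μp : Measure X)
    (ρ : (Fin d → ℝ) → ℝ) (L : X → Fin d → ℝ) (y : Fin d → ℝ) : Measure X :=
  μp.withDensity fun u => ENNReal.ofReal (ρ (y - L u) / bayesZ μp ρ L y)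

/-!
Both `ρ(y − L ū)` and `Z(y)` are `L_ρ`-Lipschitz in `y` by (N.1), and `ρ ≤ C_b` by (N.2), so the
difference of the two densities is at most `L_ρ |y − y'|_Γ Z(y)⁻¹ (1 + C_b Z(y')⁻¹)`. It remains to
bound `Z` from below: by (N.3) and Jensen's inequality for `exp`,
`Z(y) ≥ C_t⁻¹ exp(−½ ∫ |y − L|²_Γ) ≥ C_t⁻¹ exp(−|y|²_Γ − ‖L‖²_{L²})`.
-/

lemma abs_div_sub_div_le {a b z z' δ : ℝ} (hz : 0 < z) (hz' : 0 < z')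
    (hab : |a - b| ≤ δ) (hzz' : |z - z'| ≤ δ) :
    |a / z - b / z'| ≤ δ * z⁻¹ * (1 + |b| * z'⁻¹) := by
  have hδ : 0 ≤ δ := (abs_nonneg _).trans hab
  calc |a / z - b / z'| = |(a - b) * z⁻¹ + b * (z' - z) * (z⁻¹ * z'⁻¹)| := by
        congr 1; field_simp; ring
    _ ≤ |a - b| * z⁻¹ + |b| * |z - z'| * (z⁻¹ * z'⁻¹) := by
        refine (abs_add_le _ _).trans_eq ?_
        simp only [abs_mul, abs_inv, abs_of_pos hz, abs_of_pos hz', abs_sub_comm z' z]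
    _ ≤ δ * z⁻¹ + |b| * δ * (z⁻¹ * z'⁻¹) := by gcongr
    _ = δ * z⁻¹ * (1 + |b| * z'⁻¹) := by ring

lemma Real.exp_integral_le_integral_exp {X : Type*} [MeasurableSpace X] {μ : Measure X}
    [IsProbabilityMeasure μ] {f : X → ℝ} (hf : Integrable f μ)
    (hexp : Integrable (fun x => Real.exp (f x)) μ) :
    Real.exp (∫ x, f x ∂μ) ≤ ∫ x, Real.exp (f x) ∂μ :=
  convexOn_exp.map_integral_le Real.continuous_exp.continuousOn isClosed_univ
    (Filter.Eventually.of_forall fun _ => Set.mem_univ _) hf hexp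

section gammaNorm

variable {d : ℕ} {Γ : Matrix (Fin d) (Fin d) ℝ}

lemma gammaNorm_nonneg (Γ : Matrix (Fin d) (Fin d) ℝ) (y : Fin d → ℝ) : 0 ≤ gammaNorm Γ y :=
  Real.sqrt_nonneg _

@[simp]
lemma gammaNorm_zero : gammaNorm Γ 0 = 0 := by
  simp [gammaNorm]

lemma continuous_gammaNorm (Γ : Matrix (Fin d) (Fin d) ℝ) : Continuous (gammaNorm Γ) := by
  unfold gammaNorm
  simp only [dotProduct, Matrix.mulVec]
  fun_prop

lemma gammaNorm_eq_norm (hΓ : Γ.PosSemidef) (y : Fin d → ℝ) :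
    gammaNorm Γ y = @norm _ (Γ⁻¹.toSeminormedAddCommGroup hΓ.inv).toNorm y := by
  change _ = Real.sqrt (RCLike.re ((Γ⁻¹ *ᵥ y) ⬝ᵥ star y))
  rw [gammaNorm, dotProduct_comm]
  rfl

lemma gammaNorm_sub_le (hΓ : Γ.PosSemidef) (y y' : Fin d → ℝ) :
    gammaNorm Γ (y - y') ≤ gammaNorm Γ y + gammaNorm Γ y' := by
  have h := @norm_sub_le _ (Γ⁻¹.toSeminormedAddCommGroup hΓ.inv).toSeminormedAddGroup y y'
  simpa only [← gammaNorm_eq_norm hΓ] using h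

lemma gammaNorm_sub_sq_le (hΓ : Γ.PosSemidef) (y y' : Fin d → ℝ) :
    gammaNorm Γ (y - y') ^ 2 ≤ 2 * gammaNorm Γ y ^ 2 + 2 * gammaNorm Γ y' ^ 2 := by
  nlinarith [gammaNorm_sub_le hΓ y y', gammaNorm_nonneg Γ (y - y'),
    sq_nonneg (gammaNorm Γ y - gammaNorm Γ y')]

end gammaNorm

namespace IsNoiseDensity

variable {d : ℕ} {Γ : Matrix (Fin d) (Fin d) ℝ} {ρ : (Fin d → ℝ) → ℝ} {Lρ Cb Ct : ℝ}

lemma abs_sub_sub_le (hρ : IsNoiseDensity Γ ρ Lρ Cb Ct) (y y' w : Fin d → ℝ) :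
    |ρ (y - w) - ρ (y' - w)| ≤ Lρ * gammaNorm Γ (y - y') := by
  simpa only [sub_sub_sub_cancel_right] using hρ.lip (y - w) (y' - w)

protected lemma continuous (hρ : IsNoiseDensity Γ ρ Lρ Cb Ct) : Continuous ρ := by
  refine continuous_iff_continuousAt.2 fun y => tendsto_iff_dist_tendsto_zero.2 ?_
  have hcont : Continuous fun y' => Lρ * gammaNorm Γ (y' - y) :=
    continuous_const.mul ((continuous_gammaNorm Γ).comp (continuous_id.sub continuous_const))
  have hbound : Filter.Tendsto (fun y' => Lρ * gammaNorm Γ (y' - y)) (nhds y) (nhds 0) := by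
    simpa using hcont.tendsto y
  exact squeeze_zero (fun _ => dist_nonneg) (fun y' => hρ.lip y' y) hbound

variable {X : Type*} [MeasurableSpace X] {μ : Measure X} {L : X → Fin d → ℝ}

lemma integrable_comp_sub [IsFiniteMeasure μ] (hρ : IsNoiseDensity Γ ρ Lρ Cb Ct)
    (hL : Measurable L) (y : Fin d → ℝ) : Integrable (fun u => ρ (y - L u)) μ :=
  Integrable.of_bound (hρ.continuous.measurable.comp (measurable_const.sub hL)).aestronglyMeasurable
    Cb (Filter.Eventually.of_forall fun u => by
      rw [Real.norm_eq_abs, abs_of_pos (hρ.pos _)]; exact hρ.bdd _)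

lemma abs_bayesZ_sub_le [IsProbabilityMeasure μ] (hρ : IsNoiseDensity Γ ρ Lρ Cb Ct)
    (hL : Measurable L) (y y' : Fin d → ℝ) :
    |bayesZ μ ρ L y - bayesZ μ ρ L y'| ≤ Lρ * gammaNorm Γ (y - y') := by
  rw [bayesZ, bayesZ, ← integral_sub (hρ.integrable_comp_sub hL y) (hρ.integrable_comp_sub hL y')]
  simpa using norm_integral_le_of_norm_le_const (μ := μ)
    (Filter.Eventually.of_forall fun u =>
      (Real.norm_eq_abs _).trans_le (hρ.abs_sub_sub_le y y' (L u)))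

lemma inv_mul_exp_neg_le_bayesZ [IsProbabilityMeasure μ] (hΓ : Γ.PosSemidef)
    (hρ : IsNoiseDensity Γ ρ Lρ Cb Ct) (hL : Measurable L)
    (hL2 : Integrable (fun u => gammaNorm Γ (L u) ^ 2) μ) (y : Fin d → ℝ) :
    Ct⁻¹ * Real.exp (-(gammaNorm Γ y ^ 2 + ∫ u, gammaNorm Γ (L u) ^ 2 ∂μ)) ≤ bayesZ μ ρ L y := by
  set f : X → ℝ := fun u => -(1 / 2) * gammaNorm Γ (y - L u) ^ 2
  have hf_lower : ∀ u, -(gammaNorm Γ y ^ 2 + gammaNorm Γ (L u) ^ 2) ≤ f u := fun u => by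
    have := gammaNorm_sub_sq_le hΓ y (L u); simp only [f]; linarith
  have hf_nonpos : ∀ u, f u ≤ 0 := fun u => by
    have := sq_nonneg (gammaNorm Γ (y - L u)); simp only [f]; linarith
  have hf_meas : Measurable f :=
    (((continuous_gammaNorm Γ).measurable.comp (measurable_const.sub hL)).pow_const 2).const_mul _
  have hf_int : Integrable f μ := by
    refine ((integrable_const (gammaNorm Γ y ^ 2)).add hL2).mono' hf_meas.aestronglyMeasurable
      (Filter.Eventually.of_forall fun u => ?_)
    rw [Real.norm_eq_abs, abs_of_nonpos (hf_nonpos u)]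
    simp only [Pi.add_apply]
    linarith [hf_lower u]
  have hexp_int : Integrable (fun u => Real.exp (f u)) μ :=
    Integrable.of_bound (Real.continuous_exp.comp_aestronglyMeasurable hf_int.1) 1
      (Filter.Eventually.of_forall fun u => by
        rw [Real.norm_eq_abs, abs_of_pos (Real.exp_pos _)]
        exact Real.exp_le_one_iff.2 (hf_nonpos u))
  have hCt := hρ.Ct_pos
  calc Ct⁻¹ * Real.exp (-(gammaNorm Γ y ^ 2 + ∫ u, gammaNorm Γ (L u) ^ 2 ∂μ))
      ≤ Ct⁻¹ * Real.exp (∫ u, f u ∂μ) := by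
        gcongr
        calc -(gammaNorm Γ y ^ 2 + ∫ u, gammaNorm Γ (L u) ^ 2 ∂μ)
            = ∫ u, -(gammaNorm Γ y ^ 2 + gammaNorm Γ (L u) ^ 2) ∂μ := by
              rw [integral_neg, integral_add (integrable_const _) hL2, integral_const]
              simp
          _ ≤ ∫ u, f u ∂μ := integral_mono (((integrable_const _).add hL2).neg) hf_int hf_lower
    _ ≤ Ct⁻¹ * ∫ u, Real.exp (f u) ∂μ := by
        gcongr; exact Real.exp_integral_le_integral_exp hf_int hexp_int
    _ = ∫ u, Ct⁻¹ * Real.exp (f u) ∂μ := (integral_const_mul _ _).symm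
    _ ≤ bayesZ μ ρ L y :=
        integral_mono (hexp_int.const_mul _) (hρ.integrable_comp_sub hL y) fun u => hρ.tail _

lemma bayesZ_pos [IsProbabilityMeasure μ] (hΓ : Γ.PosSemidef)
    (hρ : IsNoiseDensity Γ ρ Lρ Cb Ct) (hL : Measurable L)
    (hL2 : Integrable (fun u => gammaNorm Γ (L u) ^ 2) μ) (y : Fin d → ℝ) :
    0 < bayesZ μ ρ L y :=
  have hCt := hρ.Ct_pos
  (by positivity : (0 : ℝ) < _).trans_le (hρ.inv_mul_exp_neg_le_bayesZ hΓ hL hL2 y)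

lemma inv_bayesZ_le [IsProbabilityMeasure μ] (hΓ : Γ.PosSemidef)
    (hρ : IsNoiseDensity Γ ρ Lρ Cb Ct) (hL : Measurable L)
    (hL2 : Integrable (fun u => gammaNorm Γ (L u) ^ 2) μ) (y : Fin d → ℝ) :
    (bayesZ μ ρ L y)⁻¹ ≤ Ct * Real.exp (gammaNorm Γ y ^ 2 + ∫ u, gammaNorm Γ (L u) ^ 2 ∂μ) := by
  have hCt := hρ.Ct_pos
  simpa only [mul_inv, inv_inv, Real.exp_neg] using
    inv_anti₀ (by positivity) (hρ.inv_mul_exp_neg_le_bayesZ hΓ hL hL2 y)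

lemma abs_density_sub_le [IsProbabilityMeasure μ] (hΓ : Γ.PosSemidef)
    (hρ : IsNoiseDensity Γ ρ Lρ Cb Ct) (hL : Measurable L)
    (hL2 : Integrable (fun u => gammaNorm Γ (L u) ^ 2) μ) (y y' : Fin d → ℝ) (u : X) :
    |ρ (y - L u) / bayesZ μ ρ L y - ρ (y' - L u) / bayesZ μ ρ L y'|
      ≤ Lρ * gammaNorm Γ (y - y') * (bayesZ μ ρ L y)⁻¹ * (1 + Cb * (bayesZ μ ρ L y')⁻¹) := by
  refine (abs_div_sub_div_le (hρ.bayesZ_pos hΓ hL hL2 y) (hρ.bayesZ_pos hΓ hL hL2 y')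
    (hρ.abs_sub_sub_le y y' (L u)) (hρ.abs_bayesZ_sub_le hL y y')).trans ?_
  have := hρ.Lρ_pos
  have := hρ.bayesZ_pos hΓ hL hL2 y
  have := hρ.bayesZ_pos hΓ hL hL2 y'
  have := gammaNorm_nonneg Γ (y - y')
  gcongr
  exact (abs_of_pos (hρ.pos _)).trans_le (hρ.bdd _)

end IsNoiseDensity

theorem posterior_density_lipschitz_in_y_general
    {X : Type*} [MeasurableSpace X]
    {d : ℕ}
    (Γ : Matrix (Fin d) (Fin d) ℝ) (hΓ : Γ.PosDef)
    (ρ : (Fin d → ℝ) → ℝ) (Lρ Cb Ct : ℝ) (hρ : IsNoiseDensity Γ ρ Lρ Cb Ct) :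
    ∃ C > 0, ∀ μp : Measure X, IsProbabilityMeasure μp →
      ∀ L : X → Fin d → ℝ, Measurable L →
        Integrable (fun u => (gammaNorm Γ (L u)) ^ 2) μp →
      ∀ y y' : Fin d → ℝ, ∀ u : X,
        |ρ (y - L u) / bayesZ μp ρ L y - ρ (y' - L u) / bayesZ μp ρ L y'|
          ≤ C * gammaNorm Γ (y - y') *
            Real.exp ((gammaNorm Γ y) ^ 2 + (gammaNorm Γ y') ^ 2
              + 2 * ∫ v, (gammaNorm Γ (L v)) ^ 2 ∂μp) := by
  have := hρ.Lρ_pos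
  have := hρ.Cb_pos
  have := hρ.Ct_pos
  refine ⟨Lρ * Ct * (1 + Cb * Ct), by positivity, fun μp _ L hL hL2 y y' u => ?_⟩
  set M := ∫ v, gammaNorm Γ (L v) ^ 2 ∂μp
  have hM : 0 ≤ M := integral_nonneg fun v => sq_nonneg _
  have hE' : 1 ≤ Real.exp (gammaNorm Γ y' ^ 2 + M) := Real.one_le_exp (by positivity)
  have := gammaNorm_nonneg Γ (y - y')
  have := hρ.bayesZ_pos hΓ.posSemidef hL hL2 y'
  calc _ ≤ Lρ * gammaNorm Γ (y - y') * (bayesZ μp ρ L y)⁻¹ * (1 + Cb * (bayesZ μp ρ L y')⁻¹) :=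
        hρ.abs_density_sub_le hΓ.posSemidef hL hL2 y y' u
    _ ≤ Lρ * gammaNorm Γ (y - y') * (Ct * Real.exp (gammaNorm Γ y ^ 2 + M))
          * (1 + Cb * (Ct * Real.exp (gammaNorm Γ y' ^ 2 + M))) := by
        gcongr
        exacts [hρ.inv_bayesZ_le hΓ.posSemidef hL hL2 y, hρ.inv_bayesZ_le hΓ.posSemidef hL hL2 y']
    _ ≤ Lρ * gammaNorm Γ (y - y') * (Ct * Real.exp (gammaNorm Γ y ^ 2 + M))
          * ((1 + Cb * Ct) * Real.exp (gammaNorm Γ y' ^ 2 + M)) := by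
        gcongr; nlinarith
    _ = _ := by
        rw [show gammaNorm Γ y ^ 2 + gammaNorm Γ y' ^ 2 + 2 * M
          = (gammaNorm Γ y ^ 2 + M) + (gammaNorm Γ y' ^ 2 + M) by ring,
          Real.exp_add (gammaNorm Γ y ^ 2 + M)]
        ring

/-- **Lemma 4.4: local Lipschitz dependence of the posterior density on the
measurement `y`, uniformly over `X`, with a constant depending only on the
noise density `ρ`.** -/
theorem posterior_density_lipschitz_in_y
    {X : Type*} [NormedAddCommGroup X] [NormedSpace ℝ X] [CompleteSpace X]
    [TopologicalSpace.SeparableSpace X] [MeasurableSpace X] [BorelSpace X]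
    {d : ℕ}
    (Γ : Matrix (Fin d) (Fin d) ℝ) (hΓ : Γ.PosDef)
    (ρ : (Fin d → ℝ) → ℝ) (Lρ Cb Ct : ℝ) (hρ : IsNoiseDensity Γ ρ Lρ Cb Ct) :
    ∃ C > 0, ∀ μp : Measure X, IsProbabilityMeasure μp →
      ∀ L : X → Fin d → ℝ, Measurable L →
        Integrable (fun u => (gammaNorm Γ (L u)) ^ 2) μp →
      ∀ y y' : Fin d → ℝ, ∀ u : X,
        |ρ (y - L u) / bayesZ μp ρ L y - ρ (y' - L u) / bayesZ μp ρ L y'|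
          ≤ C * gammaNorm Γ (y - y') *
            Real.exp ((gammaNorm Γ y) ^ 2 + (gammaNorm Γ y') ^ 2
              + 2 * ∫ v, (gammaNorm Γ (L v)) ^ 2 ∂μp) :=
  posterior_density_lipschitz_in_y_general Γ hΓ ρ Lρ Cb Ct hρ
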